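/- arXiv:1312.3782 — 3 statements merged into one kernel-verified Lean document; each statement's English description precedes it below -/
import Mathlib

section
/- If a real sequence (ω_n) converges to 0 and n^k (ω_n - ω_{n+1}) converges to a real number ℓ for some real k > 1, then n^{k-1} ω_n converges to ℓ/(k-1). -/
open Filter Topology

lemma mvt_bound (k : ℝ) (hk : 1 < k) (x : ℝ) (hx : 0 < x) :
    (k-1) * (x+1) ^ (-k) ≤ x ^ (1-k) - (x+1) ^ (1-k) ∧
    x ^ (1-k) - (x+1) ^ (1-k) ≤ (k-1) * x ^ (-k) := by
  have hx1 : (0:ℝ) < x + 1 := by linarith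
  obtain ⟨c, hc, hd⟩ := exists_hasDerivAt_eq_slope (fun y => y ^ (1-k))
    (fun y => (1-k) * y ^ (-k)) (by linarith : x < x + 1)
    (by
      apply ContinuousOn.rpow_const continuousOn_id
      intro y hy
      simp only [Set.mem_Icc] at hy
      exact Or.inl (fun h0 => by simp only [id_eq] at h0; nlinarith [hy.1]))
    (by
      intro y hy
      have hy0 : (0:ℝ) < y := lt_trans hx hy.1
      have := Real.hasDerivAt_rpow_const (x := y) (p := 1-k) (Or.inl hy0.ne')
      convert this using 1
      rw [show (1:ℝ)-k-1 = -k by ring])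
  have hc0 : 0 < c := lt_trans hx hc.1
  rw [show x + 1 - x = (1:ℝ) by ring, div_one] at hd
  have hmono : ∀ a b : ℝ, 0 < a → a ≤ b → b ^ (-k) ≤ a ^ (-k) := by
    intro a b ha hab
    rw [Real.rpow_neg ha.le, Real.rpow_neg (ha.trans_le hab).le]
    exact inv_anti₀ (Real.rpow_pos_of_pos ha k)
      (Real.rpow_le_rpow ha.le hab (by linarith))
  have h1 := hmono x c hx hc.1.le
  have h2 := hmono c (x+1) hc0 hc.2.le
  constructor <;> nlinarith

lemma hasSum_telescope_of_antitone (v : ℕ → ℝ) (hv : ∀ m, v (m+1) ≤ v m)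
    (h0 : Tendsto v atTop (𝓝 0)) : HasSum (fun m => v m - v (m+1)) (v 0) := by
  have hvm : ∀ m, 0 ≤ v m := by
    intro m
    have : ∀ j, ∀ i ≥ j, v i ≤ v j := by
      intro j i hi
      induction i, hi using Nat.le_induction with
      | base => exact le_refl _
      | succ i hi ih => exact le_trans (hv i) ih
    exact le_of_tendsto h0 (eventually_atTop.mpr ⟨m, this m⟩)
  have hsum : Summable (fun m => v m - v (m+1)) := by
    apply summable_of_sum_range_le (c := v 0) (fun m => by linarith [hv m])
    intro n
    rw [Finset.sum_range_sub' v n]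
    linarith [hvm n]
  rw [Summable.hasSum_iff_tendsto_nat hsum]
  simp only [Finset.sum_range_sub' v]
  simpa using tendsto_const_nhds.sub h0

theorem mortici_lemma (ω : ℕ → ℝ) (k ℓ : ℝ) (hk : 1 < k)
    (h0 : Tendsto ω atTop (𝓝 0))
    (h : Tendsto (fun n : ℕ => (n : ℝ) ^ k * (ω n - ω (n + 1))) atTop (𝓝 ℓ)) :
    Tendsto (fun n : ℕ => (n : ℝ) ^ (k - 1) * ω n) atTop (𝓝 (ℓ / (k - 1))) := by
  have hk1 : (0:ℝ) < k - 1 := by linarith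
  set a : ℕ → ℝ := fun n => (n:ℝ) ^ k * (ω n - ω (n+1)) with ha
  set g : ℕ → ℝ := fun m => (m:ℝ) ^ (-k) with hgdef
  have hg : Summable g := Real.summable_nat_rpow.mpr (by linarith)
  have hgnn : ∀ m, 0 ≤ g m := fun m => Real.rpow_nonneg (Nat.cast_nonneg m) _
  have hgtail : ∀ n : ℕ, Summable (fun m => g (m + n)) :=
    fun n => (summable_nat_add_iff n).mpr hg
  set U : ℕ → ℝ := fun n => ∑' m, g (m + n) with hUdef
  have hUhs : ∀ n : ℕ, HasSum (fun m => g (m + n)) (U n) := fun n => (hgtail n).hasSum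
  have hUnn : ∀ n, 0 ≤ U n := fun n => tsum_nonneg (fun m => hgnn _)
  -- delta identity
  have hdelta : ∀ j : ℕ, 1 ≤ j → ω j - ω (j+1) = a j * g j := by
    intro j hj
    have hj0 : (0:ℝ) < (j:ℝ) := by exact_mod_cast hj
    have h1 : (j:ℝ)^k * (j:ℝ)^(-k) = 1 := by
      rw [← Real.rpow_add hj0]; simp
    calc ω j - ω (j+1) = (ω j - ω (j+1)) * ((j:ℝ)^k * (j:ℝ)^(-k)) := by rw [h1, mul_one]
    _ = ((j:ℝ)^k * (ω j - ω (j+1))) * (j:ℝ)^(-k) := by ring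
  -- telescoping tail sums and U bounds
  have hkey : ∀ n : ℕ, 1 ≤ n →
      (k-1) * U (n+1) ≤ (n:ℝ)^(1-k) ∧ (n:ℝ)^(1-k) ≤ (k-1) * U n := by
    intro n hn
    set v : ℕ → ℝ := fun m => ((m + n : ℕ):ℝ) ^ (1-k) with hv
    have hbase : ∀ m : ℕ, (0:ℝ) < ((m + n : ℕ):ℝ) := by
      intro m; have : 0 < m + n := by omega
      exact_mod_cast this
    have hanti : ∀ m, v (m+1) ≤ v m := by
      intro m
      have h1 : ((m + n : ℕ):ℝ) ≤ ((m + 1 + n : ℕ):ℝ) := by push_cast; linarith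
      show ((m + 1 + n : ℕ):ℝ) ^ (1-k) ≤ ((m + n : ℕ):ℝ) ^ (1-k)
      rw [show (1:ℝ)-k = -(k-1) by ring]
      rw [Real.rpow_neg (hbase (m+1)).le, Real.rpow_neg (hbase m).le]
      exact inv_anti₀ (Real.rpow_pos_of_pos (hbase m) _)
        (Real.rpow_le_rpow (hbase m).le h1 (by linarith))
    have hlim : Tendsto v atTop (𝓝 0) := by
      have h1 : Tendsto (fun m : ℕ => ((m + n : ℕ):ℝ)) atTop atTop :=
        tendsto_natCast_atTop_atTop.comp (tendsto_add_atTop_nat n)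
      have h2 := (tendsto_rpow_neg_atTop hk1).comp h1
      have he : v = fun m : ℕ => ((m + n : ℕ):ℝ) ^ (-(k-1)) := by
        funext m
        show ((m + n : ℕ):ℝ) ^ (1-k) = _
        rw [show (1:ℝ)-k = -(k-1) by ring]
      rw [he]; exact h2
    have htel := hasSum_telescope_of_antitone v hanti hlim
    have hv0 : v 0 = (n:ℝ)^(1-k) := by
      show ((0 + n : ℕ):ℝ) ^ (1-k) = _
      rw [Nat.zero_add]
    rw [hv0] at htel
    -- termwise MVT bounds
    have hterm : ∀ m : ℕ,
        (k-1) * g (m+n+1) ≤ v m - v (m+1) ∧ v m - v (m+1) ≤ (k-1) * g (m+n) := by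
      intro m
      have H := mvt_bound k hk ((m + n : ℕ):ℝ) (hbase m)
      have hc1 : ((m + n : ℕ):ℝ) + 1 = ((m + n + 1 : ℕ):ℝ) := by push_cast; ring
      rw [hc1] at H
      have e2 : v (m+1) = ((m + n + 1 : ℕ):ℝ) ^ (1-k) := by
        show ((m + 1 + n : ℕ):ℝ) ^ (1-k) = _
        congr 2
        omega
      have e3 : v m = ((m + n : ℕ):ℝ) ^ (1-k) := rfl
      rw [e2, e3]
      exact H
    constructor
    · -- lower: (k-1) * U (n+1) ≤ tsum tel
      have hs1 : Summable (fun m => (k-1) * g (m + (n+1))) := (hgtail (n+1)).mul_left _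
      have hle : ∑' m, (k-1) * g (m + (n+1)) ≤ (n:ℝ)^(1-k) := by
        rw [← htel.tsum_eq]
        exact Summable.tsum_le_tsum (fun m => (hterm m).1) hs1 htel.summable
      calc (k-1) * U (n+1) = ∑' m, (k-1) * g (m + (n+1)) := by rw [hUdef, tsum_mul_left]
      _ ≤ (n:ℝ)^(1-k) := hle
    · have hs1 : Summable (fun m => (k-1) * g (m + n)) := (hgtail n).mul_left _
      have hle : (n:ℝ)^(1-k) ≤ ∑' m, (k-1) * g (m + n) := by
        rw [← htel.tsum_eq]
        exact Summable.tsum_le_tsum (fun m => (hterm m).2) htel.summable hs1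
      calc (n:ℝ)^(1-k) ≤ ∑' m, (k-1) * g (m + n) := hle
      _ = (k-1) * U n := by rw [hUdef, tsum_mul_left]
  -- U recursion
  have hUrec : ∀ n : ℕ, U n = g n + U (n+1) := by
    intro n
    have h1 := Summable.tsum_eq_zero_add (hgtail n)
    rw [Nat.zero_add] at h1
    have h2 : ∀ m : ℕ, g (m + 1 + n) = g (m + (n+1)) := fun m => by congr 1; omega
    calc U n = g n + ∑' m, g (m + 1 + n) := h1
    _ = g n + ∑' m, g (m + (n+1)) := by rw [tsum_congr h2]
    _ = g n + U (n+1) := rfl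
  -- E bounds
  set E : ℕ → ℝ := fun n => (n:ℝ)^(k-1) * U n with hE
  have hEbounds : ∀ n : ℕ, 1 ≤ n → 1/(k-1) ≤ E n ∧ E n ≤ (n:ℝ)⁻¹ + 1/(k-1) := by
    intro n hn
    have hn0 : (0:ℝ) < (n:ℝ) := by exact_mod_cast hn
    have hp1 : (n:ℝ)^(k-1) * (n:ℝ)^(1-k) = 1 := by
      rw [← Real.rpow_add hn0]; norm_num
    have hp2 : (n:ℝ)^(k-1) * g n = (n:ℝ)⁻¹ := by
      rw [hgdef, ← Real.rpow_add hn0, show k-1 + -k = -1 by ring, Real.rpow_neg_one]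
    have hppos : (0:ℝ) < (n:ℝ)^(k-1) := Real.rpow_pos_of_pos hn0 _
    obtain ⟨hlo, hhi⟩ := hkey n hn
    constructor
    · -- 1/(k-1) ≤ E n
      have := mul_le_mul_of_nonneg_left hhi hppos.le
      rw [hp1] at this
      rw [div_le_iff₀ hk1]
      calc 1 ≤ (n:ℝ)^(k-1) * ((k-1) * U n) := this
      _ = E n * (k-1) := by rw [hE]; ring
    · have hU1 : U (n+1) ≤ (n:ℝ)^(1-k) / (k-1) := by
        rw [le_div_iff₀ hk1]; linarith [hlo]
      have : U n ≤ g n + (n:ℝ)^(1-k) / (k-1) := by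
        rw [hUrec n]; linarith
      have h2 := mul_le_mul_of_nonneg_left this hppos.le
      rw [hE]
      calc (n:ℝ)^(k-1) * U n ≤ (n:ℝ)^(k-1) * (g n + (n:ℝ)^(1-k)/(k-1)) := h2
      _ = (n:ℝ)^(k-1) * g n + ((n:ℝ)^(k-1) * (n:ℝ)^(1-k))/(k-1) := by ring
      _ = (n:ℝ)⁻¹ + 1/(k-1) := by rw [hp1, hp2]
  -- E tends to 1/(k-1)
  have hupper : Tendsto (fun n : ℕ => (n:ℝ)⁻¹ + 1/(k-1)) atTop (𝓝 (1/(k-1))) := by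
    have := (tendsto_inv_atTop_nhds_zero_nat (𝕜 := ℝ)).add
      (tendsto_const_nhds : Tendsto (fun _ : ℕ => 1/(k-1)) atTop (𝓝 (1/(k-1))))
    simpa using this
  have hEtends : Tendsto E atTop (𝓝 (1/(k-1))) := by
    apply tendsto_of_tendsto_of_tendsto_of_le_of_le'
      (tendsto_const_nhds : Tendsto (fun _ : ℕ => 1/(k-1)) atTop _) hupper
    · exact eventually_atTop.mpr ⟨1, fun n hn => (hEbounds n hn).1⟩
    · exact eventually_atTop.mpr ⟨1, fun n hn => (hEbounds n hn).2⟩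
  -- bound on a near infinity
  obtain ⟨N₁', hN₁'⟩ := Metric.tendsto_atTop.mp h 1 one_pos
  set N₁ := max N₁' 1 with hN₁def
  have haBound : ∀ j : ℕ, N₁ ≤ j → |a j| ≤ |ℓ| + 1 := by
    intro j hj
    have := hN₁' j (le_trans (le_max_left _ _) hj)
    rw [Real.dist_eq] at this
    calc |a j| = |(a j - ℓ) + ℓ| := by ring_nf
    _ ≤ |a j - ℓ| + |ℓ| := abs_add_le _ _
    _ ≤ |ℓ| + 1 := by linarith
  -- ω as tail sum
  have hωsum : ∀ n : ℕ, N₁ ≤ n → HasSum (fun m => ω (m+n) - ω (m+n+1)) (ω n) := by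
    intro n hn
    have hn1 : 1 ≤ n := le_trans (le_max_right _ _) hn
    have hsummable : Summable (fun m => ω (m+n) - ω (m+n+1)) := by
      apply Summable.of_norm_bounded ((hgtail n).mul_left (|ℓ| + 1))
      intro m
      have hmn1 : 1 ≤ m + n := le_trans hn1 (Nat.le_add_left n m)
      rw [hdelta (m+n) hmn1, Real.norm_eq_abs, abs_mul, abs_of_nonneg (hgnn (m+n))]
      exact mul_le_mul_of_nonneg_right (haBound (m+n) (le_trans hn (Nat.le_add_left n m)))
        (hgnn (m+n))
    rw [Summable.hasSum_iff_tendsto_nat hsummable]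
    have htele : ∀ M : ℕ, ∑ i ∈ Finset.range M, (ω (i+n) - ω (i+n+1)) = ω n - ω (M + n) := by
      intro M
      have := Finset.sum_range_sub' (fun i => ω (i + n)) M
      simp only [Nat.zero_add] at this
      rw [← this]
      apply Finset.sum_congr rfl
      intro i _
      congr 2
      omega
    simp only [htele]
    have : Tendsto (fun M : ℕ => ω (M + n)) atTop (𝓝 0) :=
      h0.comp (tendsto_add_atTop_nat n)
    simpa using tendsto_const_nhds.sub this
  -- the difference term tends to 0
  have hD : Tendsto (fun n : ℕ => (n:ℝ)^(k-1) * ω n - ℓ * E n) atTop (𝓝 0) := by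
    rw [Metric.tendsto_atTop]
    intro ε hε
    set C : ℝ := 1 + 1/(k-1) with hC
    have hC0 : 0 < C := by positivity
    have hε' : 0 < ε / (2*C) := by positivity
    obtain ⟨N₂', hN₂'⟩ := Metric.tendsto_atTop.mp h (ε/(2*C)) hε'
    set N := max N₂' N₁ with hN
    refine ⟨N, fun n hn => ?_⟩
    have hnN₁ : N₁ ≤ n := le_trans (le_max_right _ _) hn
    have hn1 : 1 ≤ n := le_trans (le_max_right _ _) hnN₁
    have hn0 : (0:ℝ) < (n:ℝ) := by exact_mod_cast hn1
    have hppos : (0:ℝ) ≤ (n:ℝ)^(k-1) := (Real.rpow_pos_of_pos hn0 _).le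
    -- key tsum bound
    have hhs : HasSum (fun m => (ω (m+n) - ω (m+n+1)) - ℓ * g (m+n)) (ω n - ℓ * U n) :=
      (hωsum n hnN₁).sub ((hUhs n).mul_left ℓ)
    have htermbd : ∀ m : ℕ, ‖(ω (m+n) - ω (m+n+1)) - ℓ * g (m+n)‖ ≤ (ε/(2*C)) * g (m+n) := by
      intro m
      have hmn1 : 1 ≤ m + n := le_trans hn1 (Nat.le_add_left n m)
      have hmnN : N₂' ≤ m + n := le_trans (le_trans (le_max_left _ _) hn) (Nat.le_add_left n m)
      have hdist := hN₂' (m+n) hmnN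
      rw [Real.dist_eq] at hdist
      rw [hdelta (m+n) hmn1, Real.norm_eq_abs, show a (m+n) * g (m+n) - ℓ * g (m+n) =
        (a (m+n) - ℓ) * g (m+n) by ring, abs_mul, abs_of_nonneg (hgnn (m+n))]
      exact mul_le_mul_of_nonneg_right hdist.le (hgnn (m+n))
    have hnormsummable : Summable (fun m => ‖(ω (m+n) - ω (m+n+1)) - ℓ * g (m+n)‖) := by
      apply Summable.of_nonneg_of_le (fun m => norm_nonneg _) htermbd
      exact (hgtail n).mul_left _
    have habs : |ω n - ℓ * U n| ≤ (ε/(2*C)) * U n := by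
      calc |ω n - ℓ * U n| = ‖∑' m, ((ω (m+n) - ω (m+n+1)) - ℓ * g (m+n))‖ := by
            rw [hhs.tsum_eq]; rfl
      _ ≤ ∑' m, ‖(ω (m+n) - ω (m+n+1)) - ℓ * g (m+n)‖ := norm_tsum_le_tsum_norm hnormsummable
      _ ≤ ∑' m, (ε/(2*C)) * g (m+n) :=
            Summable.tsum_le_tsum htermbd hnormsummable ((hgtail n).mul_left _)
      _ = (ε/(2*C)) * U n := by rw [hUdef, tsum_mul_left]
    rw [Real.dist_eq, sub_zero]
    have heq : (n:ℝ)^(k-1) * ω n - ℓ * E n = (n:ℝ)^(k-1) * (ω n - ℓ * U n) := by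
      rw [hE]; ring
    rw [heq, abs_mul, abs_of_nonneg hppos]
    have hEC : E n ≤ C := by
      have := (hEbounds n hn1).2
      have hinv : (n:ℝ)⁻¹ ≤ 1 := by
        have h1n : (1:ℝ) ≤ (n:ℝ) := by exact_mod_cast hn1
        exact inv_le_one_of_one_le₀ h1n
      rw [hC]; linarith
    calc (n:ℝ)^(k-1) * |ω n - ℓ * U n| ≤ (n:ℝ)^(k-1) * ((ε/(2*C)) * U n) :=
          mul_le_mul_of_nonneg_left habs hppos
    _ = (ε/(2*C)) * E n := by rw [hE]; ring
    _ ≤ (ε/(2*C)) * C := mul_le_mul_of_nonneg_left hEC hε'.le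
    _ = ε/2 := by field_simp
    _ < ε := by linarith
  -- assemble
  have hfinal : (fun n : ℕ => (n:ℝ)^(k-1) * ω n) =
      fun n : ℕ => ((n:ℝ)^(k-1) * ω n - ℓ * E n) + ℓ * E n := by funext n; ring
  rw [hfinal, show ℓ/(k-1) = 0 + ℓ * (1/(k-1)) by field_simp; ring]
  exact hD.add (hEtends.const_mul ℓ)
end

section
/- For every integer n ≥ 2, the Wallis ratio satisfies √(e/π) · (1 - 1/(2n))^n · √(n-1)/n < W_n ≤ (4/3) · (1 - 1/(2n))^n · √(n-1)/n. -/
open Real Filter Topology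

noncomputable def W (n : ℕ) : ℝ :=
  (∏ k ∈ Finset.range n, (2 * (k : ℝ) + 1)) / (∏ k ∈ Finset.range n, (2 * (k : ℝ) + 2))

lemma P_pos (n : ℕ) : 0 < ∏ k ∈ Finset.range n, (2 * (k : ℝ) + 1) :=
  Finset.prod_pos fun k _ => by positivity

lemma Q_pos (n : ℕ) : 0 < ∏ k ∈ Finset.range n, (2 * (k : ℝ) + 2) :=
  Finset.prod_pos fun k _ => by positivity

lemma W_pos (n : ℕ) : 0 < W n := div_pos (P_pos n) (Q_pos n)

lemma W_succ' (n : ℕ) : W (n + 1) = W n * ((2 * (n:ℝ) + 1) / (2 * (n:ℝ) + 2)) := by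
  rw [W, W, Finset.prod_range_succ, Finset.prod_range_succ, div_mul_div_comm]

lemma W_two : W 2 = 3 / 8 := by
  rw [W]
  simp [Finset.prod_range_succ]
  norm_num

lemma wallis_rel (n : ℕ) : Real.Wallis.W n *
    ((∏ k ∈ Finset.range n, (2 * (k : ℝ) + 1))^2 * (2 * n + 1)) =
    (∏ k ∈ Finset.range n, (2 * (k : ℝ) + 2))^2 := by
  induction n with
  | zero => simp [Real.Wallis.W]
  | succ n IH =>
    rw [Real.Wallis.W_succ, Finset.prod_range_succ, Finset.prod_range_succ]
    push_cast
    have h1 : (2*(n:ℝ)+1) ≠ 0 := by positivity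
    have h3 : (2*(n:ℝ)+3) ≠ 0 := by positivity
    field_simp
    simp only [show ∀ x : ℝ, 2 * (x + 1) = 2 * x + 2 from fun x => by ring]
    linear_combination (2*(n:ℝ)+3) * IH

lemma wallis_lt (n : ℕ) : Real.Wallis.W n < π / 2 := by
  have h := Real.Wallis.W_le (n+1)
  have hs := Real.Wallis.W_succ n
  have hp := Real.Wallis.W_pos n
  have hm : (1:ℝ) < (2 * n + 2) / (2 * n + 1) * ((2 * n + 2) / (2 * n + 3)) := by
    rw [div_mul_div_comm, lt_div_iff₀ (by positivity)]
    nlinarith [sq_nonneg ((n:ℝ))]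
  nlinarith [Real.Wallis.W_pos n]

lemma W_sq_lower (n : ℕ) : 2 / (π * (2 * (n:ℝ) + 1)) < W n ^ 2 := by
  have h := wallis_rel n
  have hw := wallis_lt n
  have hwp := Real.Wallis.W_pos n
  have hp := P_pos n
  have hq := Q_pos n
  have hpi := Real.pi_pos
  have hWsq : W n ^ 2 * (2 * n + 1) = 1 / Real.Wallis.W n := by
    rw [W, div_pow, eq_div_iff (ne_of_gt hwp)]
    field_simp
    simp only [show ∀ x : ℝ, 2 * (x + 1) = 2 * x + 2 from fun x => by ring]
    linarith [h]
  have h2 : 2 / π < 1 / Real.Wallis.W n := by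
    rw [div_lt_div_iff₀ hpi hwp]
    linarith
  have h3 : 2 / π < W n ^ 2 * (2 * n + 1) := by rw [hWsq]; exact h2
  rw [div_lt_iff₀ hpi] at h3
  rw [div_lt_iff₀ (by positivity)]
  nlinarith [h3]

lemma bern (n : ℕ) (s : ℝ) (hs : 2 ≤ s) (hns : (n : ℝ) = s) :
    (1 - 1 / (2 * s ^ 2 + s)) ^ (2 * n) ≤ (2 * s + 1) / (2 * s + 3) := by
  have hden : (0:ℝ) < 2 * s ^ 2 + s := by nlinarith
  set x := 1 / (2 * s ^ 2 + s) with hxdef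
  have hx0 : 0 < x := by positivity
  have hx1 : x ≤ 1 := by rw [hxdef, div_le_one hden]; nlinarith
  have hr0 : (0:ℝ) ≤ 1 - x := by linarith
  have h1 : (1 - x) * (1 + x) ≤ 1 := by nlinarith [sq_nonneg x]
  have hAB : (1 - x) ^ (2 * n) * (1 + x) ^ (2 * n) ≤ 1 := by
    rw [← mul_pow]; exact pow_le_one₀ (by nlinarith) h1
  have h3 : 1 + ((2 * n : ℕ) : ℝ) * x ≤ (1 + x) ^ (2 * n) :=
    one_add_mul_le_pow (by linarith) (2 * n)
  have h4 : ((2 * n : ℕ) : ℝ) = 2 * s := by push_cast; rw [hns]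
  have h5 : 1 + 2 * s * x = (2 * s + 3) / (2 * s + 1) := by
    rw [hxdef]; field_simp; ring
  have h6 : (2 * s + 3) / (2 * s + 1) ≤ (1 + x) ^ (2 * n) := by
    rw [← h5, ← h4]; exact h3
  have h7 : 2 * s + 3 ≤ (1 + x) ^ (2 * n) * (2 * s + 1) := by
    rw [div_le_iff₀ (by linarith : (0:ℝ) < 2 * s + 1)] at h6; linarith
  have hA : (0:ℝ) ≤ (1 - x) ^ (2 * n) := pow_nonneg hr0 _
  rw [le_div_iff₀ (by linarith : (0:ℝ) < 2 * s + 3)]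
  nlinarith [mul_le_mul_of_nonneg_left h7 hA, hAB]

lemma key (n : ℕ) (s : ℝ) (hs : 2 ≤ s) (hns : (n : ℝ) = s) :
    (1 - 1 / (2 * s)) ^ n * Real.sqrt (s - 1) / s * ((2 * s + 1) / (2 * s + 2)) ≤
      (1 - 1 / (2 * (s + 1))) ^ (n + 1) * Real.sqrt s / (s + 1) := by
  have hA : 1 - 1 / (2 * s) = (2 * s + 1) / (2 * s + 2) * (1 - 1 / (2 * s ^ 2 + s)) := by
    have h1 : (2:ℝ) * s ≠ 0 := by positivity
    have h2 : (2:ℝ) * s + 2 ≠ 0 := by positivity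
    have h3 : (2:ℝ) * s ^ 2 + s ≠ 0 := by nlinarith
    field_simp
    ring
  have hB : 1 - 1 / (2 * (s + 1)) = (2 * s + 1) / (2 * s + 2) := by
    have h2 : (2:ℝ) * (s + 1) ≠ 0 := by positivity
    field_simp
    ring
  rw [hA, hB, mul_pow, pow_succ]
  have hBpos : (0:ℝ) < (2 * s + 1) / (2 * s + 2) := by positivity
  have hr0 : (0:ℝ) ≤ 1 - 1 / (2 * s ^ 2 + s) := by
    have hden : (0:ℝ) < 2 * s ^ 2 + s := by nlinarith
    have : 1 / (2 * s ^ 2 + s) ≤ 1 := by rw [div_le_one hden]; nlinarith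
    linarith
  have hcore : (1 - 1 / (2 * s ^ 2 + s)) ^ n * Real.sqrt (s - 1) / s ≤
      Real.sqrt s / (s + 1) := by
    have hb := bern n s hs hns
    have hb2 : (1 - 1 / (2 * s ^ 2 + s)) ^ (2 * n) * (2 * s + 3) ≤ 2 * s + 1 := by
      rw [← le_div_iff₀ (by linarith : (0:ℝ) < 2 * s + 3)]; exact hb
    have h0 : (0:ℝ) ≤ (1 - 1 / (2 * s ^ 2 + s)) ^ (2 * n) := pow_nonneg hr0 _
    have hL0 : 0 ≤ (1 - 1 / (2 * s ^ 2 + s)) ^ n * Real.sqrt (s - 1) / s := by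
      have := Real.sqrt_nonneg (s - 1)
      have := pow_nonneg hr0 n
      positivity
    have hsq : ((1 - 1 / (2 * s ^ 2 + s)) ^ n * Real.sqrt (s - 1) / s) ^ 2 ≤
        (Real.sqrt s / (s + 1)) ^ 2 := by
      have e1 : ((1 - 1 / (2 * s ^ 2 + s)) ^ n * Real.sqrt (s - 1) / s) ^ 2 =
          (1 - 1 / (2 * s ^ 2 + s)) ^ (2 * n) * (s - 1) / s ^ 2 := by
        rw [div_pow, mul_pow, ← pow_mul, mul_comm n 2,
          Real.sq_sqrt (by linarith : (0:ℝ) ≤ s - 1)]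
      have e2 : (Real.sqrt s / (s + 1)) ^ 2 = s / (s + 1) ^ 2 := by
        rw [div_pow, Real.sq_sqrt (by linarith : (0:ℝ) ≤ s)]
      rw [e1, e2, div_le_div_iff₀ (by positivity) (by positivity)]
      nlinarith [mul_le_mul_of_nonneg_right hb2
        (show (0:ℝ) ≤ (s - 1) * (s + 1) ^ 2 by nlinarith), h0]
    calc (1 - 1 / (2 * s ^ 2 + s)) ^ n * Real.sqrt (s - 1) / s
        = Real.sqrt (((1 - 1 / (2 * s ^ 2 + s)) ^ n * Real.sqrt (s - 1) / s) ^ 2) :=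
          (Real.sqrt_sq hL0).symm
      _ ≤ Real.sqrt ((Real.sqrt s / (s + 1)) ^ 2) := Real.sqrt_le_sqrt hsq
      _ = Real.sqrt s / (s + 1) := Real.sqrt_sq (by positivity)
  calc ((2 * s + 1) / (2 * s + 2)) ^ n * (1 - 1 / (2 * s ^ 2 + s)) ^ n *
        Real.sqrt (s - 1) / s * ((2 * s + 1) / (2 * s + 2))
      = ((2 * s + 1) / (2 * s + 2)) ^ n * ((2 * s + 1) / (2 * s + 2)) *
        ((1 - 1 / (2 * s ^ 2 + s)) ^ n * Real.sqrt (s - 1) / s) := by ring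
    _ ≤ ((2 * s + 1) / (2 * s + 2)) ^ n * ((2 * s + 1) / (2 * s + 2)) *
        (Real.sqrt s / (s + 1)) := by
        apply mul_le_mul_of_nonneg_left hcore (by positivity)
    _ = ((2 * s + 1) / (2 * s + 2)) ^ n * ((2 * s + 1) / (2 * s + 2)) *
        Real.sqrt s / (s + 1) := by ring

lemma upper_bound (m : ℕ) (hm : 2 ≤ m) :
    W m ≤ 4 / 3 * (1 - 1 / (2 * (m:ℝ))) ^ m * Real.sqrt ((m:ℝ) - 1) / (m:ℝ) := by
  induction m, hm using Nat.le_induction with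
  | base =>
    rw [W_two]
    push_cast
    rw [show (2:ℝ) - 1 = 1 by norm_num, Real.sqrt_one]
    norm_num
  | succ m hm IH =>
    have hsm : (2:ℝ) ≤ (m:ℝ) := by exact_mod_cast hm
    have hm0 : (0:ℝ) < (m:ℝ) := by linarith
    push_cast
    rw [W_succ', show (m:ℝ) + 1 - 1 = (m:ℝ) by ring]
    calc W m * ((2 * (m:ℝ) + 1) / (2 * (m:ℝ) + 2))
        ≤ 4 / 3 * (1 - 1 / (2 * (m:ℝ))) ^ m * Real.sqrt ((m:ℝ) - 1) / (m:ℝ) *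
          ((2 * (m:ℝ) + 1) / (2 * (m:ℝ) + 2)) := by
          apply mul_le_mul_of_nonneg_right IH (by positivity)
      _ = 4 / 3 * ((1 - 1 / (2 * (m:ℝ))) ^ m * Real.sqrt ((m:ℝ) - 1) / (m:ℝ) *
          ((2 * (m:ℝ) + 1) / (2 * (m:ℝ) + 2))) := by ring
      _ ≤ 4 / 3 * ((1 - 1 / (2 * ((m:ℝ) + 1))) ^ (m + 1) * Real.sqrt (m:ℝ) / ((m:ℝ) + 1)) := by
          apply mul_le_mul_of_nonneg_left (key m (m:ℝ) hsm rfl) (by norm_num)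
      _ = 4 / 3 * (1 - 1 / (2 * ((m:ℝ) + 1))) ^ (m + 1) * Real.sqrt (m:ℝ) / ((m:ℝ) + 1) := by
          ring

theorem guo_xu_qi_ineq (n : ℕ) (hn : 2 ≤ n) :
    Real.sqrt (Real.exp 1 / π) * (1 - 1 / (2 * n)) ^ n * Real.sqrt (n - 1) / n < W n ∧
    W n ≤ (4 / 3) * (1 - 1 / (2 * n)) ^ n * Real.sqrt (n - 1) / n := by
  have hs : (2:ℝ) ≤ (n:ℝ) := by exact_mod_cast hn
  have hn0 : (0:ℝ) < (n:ℝ) := by linarith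
  refine ⟨?_, upper_bound n hn⟩
  have hA1 : (1 - 1 / (2 * (n:ℝ))) ^ n < Real.exp (-(1/2)) := by
    have h0 : (0:ℝ) ≤ 1 - 1 / (2 * (n:ℝ)) := by
      rw [sub_nonneg, div_le_one (by linarith)]; linarith
    have h1 : 1 - 1 / (2 * (n:ℝ)) < Real.exp (-(1 / (2 * (n:ℝ)))) := by
      have hp : (0:ℝ) < 1 / (2 * (n:ℝ)) := by positivity
      have hne : -(1 / (2 * (n:ℝ))) ≠ 0 := by intro h; rw [neg_eq_zero] at h; linarith
      have := Real.add_one_lt_exp hne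
      linarith
    calc (1 - 1 / (2 * (n:ℝ))) ^ n < Real.exp (-(1 / (2 * (n:ℝ)))) ^ n :=
          pow_lt_pow_left₀ h1 h0 (by omega)
      _ = Real.exp (-(1/2)) := by
          rw [← Real.exp_nat_mul]
          congr 1
          field_simp
  have hE : Real.sqrt (Real.exp 1 / π) * Real.exp (-(1/2)) * Real.sqrt ((n:ℝ) - 1) =
      Real.sqrt (((n:ℝ) - 1) / π) := by
    rw [show (-(1/2):ℝ) = (-1)/2 by norm_num, Real.exp_half,
      ← Real.sqrt_mul (by positivity), ← Real.sqrt_mul (by positivity)]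
    congr 1
    rw [Real.exp_neg]
    have hpi := Real.pi_pos
    have he := Real.exp_ne_zero 1
    field_simp
  have hW2 : Real.sqrt (((n:ℝ) - 1) / π) / (n:ℝ) ≤ W n := by
    have hpi := Real.pi_pos
    have ha : (0:ℝ) ≤ ((n:ℝ) - 1) / π := div_nonneg (by linarith) hpi.le
    have h1 : ((n:ℝ) - 1) / π / (n:ℝ) ^ 2 ≤ W n ^ 2 := by
      refine le_of_lt (lt_of_le_of_lt ?_ (W_sq_lower n))
      rw [div_div, div_le_div_iff₀ (by positivity) (by positivity)]
      nlinarith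
    calc Real.sqrt (((n:ℝ) - 1) / π) / (n:ℝ)
        = Real.sqrt (((n:ℝ) - 1) / π / (n:ℝ) ^ 2) := by
          rw [Real.sqrt_div ha, Real.sqrt_sq hn0.le]
      _ ≤ Real.sqrt (W n ^ 2) := Real.sqrt_le_sqrt h1
      _ = W n := Real.sqrt_sq (W_pos n).le
  calc Real.sqrt (Real.exp 1 / π) * (1 - 1 / (2 * (n:ℝ))) ^ n * Real.sqrt ((n:ℝ) - 1) / (n:ℝ)
      < Real.sqrt (Real.exp 1 / π) * Real.exp (-(1/2)) * Real.sqrt ((n:ℝ) - 1) / (n:ℝ) := by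
        have hx : (0:ℝ) < Real.sqrt (Real.exp 1 / π) := Real.sqrt_pos.mpr (by positivity)
        have hy : (0:ℝ) < Real.sqrt ((n:ℝ) - 1) := Real.sqrt_pos.mpr (by linarith)
        have h := mul_lt_mul_of_pos_right (mul_lt_mul_of_pos_left hA1 hx) hy
        rw [div_lt_div_iff₀ hn0 hn0]
        nlinarith [h]
    _ = Real.sqrt (((n:ℝ) - 1) / π) / (n:ℝ) := by rw [hE]
    _ ≤ W n := hW2
end

section
/- Define z_n(a) by W_n = √(e/π) · (1 - 1/(2n))^n · (√(n+a)/n) · exp(z_n(a)) for a real parameter a > -1 and n ≥ 1. Then lim_{n→∞} n^2 (z_n(a) - z_{n+1}(a)) = -a/2. -/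
open Real Filter Topology

/-- Third-order Taylor remainder of `log (1 + u)` divided by `u ^ 3`. -/
noncomputable def rr (u : ℝ) : ℝ :=
  (Real.log (1 + u) - (u - u ^ 2 / 2 + u ^ 3 / 3)) / u ^ 3

lemma rr_zero : rr 0 = 0 := by simp [rr]

lemma log_eq_rr (u : ℝ) :
    Real.log (1 + u) = u - u ^ 2 / 2 + u ^ 3 / 3 + u ^ 3 * rr u := by
  rcases eq_or_ne u 0 with h | h
  · simp [h, rr]
  · rw [rr]
    field_simp
    ring

lemma rr_tendsto : Tendsto rr (𝓝 0) (𝓝 0) := by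
  have hg : Tendsto (fun u : ℝ => |u| / (1 - |u|)) (𝓝 0) (𝓝 0) := by
    have hc : ContinuousAt (fun u : ℝ => |u| / (1 - |u|)) 0 := by
      apply ContinuousAt.div (by fun_prop) (by fun_prop)
      norm_num
    simpa using hc.tendsto
  apply squeeze_zero_norm' ?_ hg
  filter_upwards [eventually_abs_sub_lt 0 (by norm_num : (0:ℝ) < 1/2)] with u hu
  rw [sub_zero] at hu
  rcases eq_or_ne u 0 with h | h
  · simp [h, rr_zero]
  · have h1 : |(-u)| < 1 := by rw [abs_neg]; linarith
    have h3 := Real.abs_log_sub_add_sum_range_le h1 3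
    have hsum : (∑ i ∈ Finset.range 3, (-u) ^ (i + 1) / (i + 1)) =
        -(Real.log (1 + u) - (u - u ^ 2 / 2 + u ^ 3 / 3)) - Real.log (1 - -u)
          + (Real.log (1 + u)) - (Real.log (1+u)) + (-u + u^2/2 - u^3/3) -
          (-(Real.log (1 + u) - (u - u ^ 2 / 2 + u ^ 3 / 3)) - Real.log (1 - -u)
          + (Real.log (1 + u)) - (Real.log (1+u)) + (-u + u^2/2 - u^3/3))
          + (∑ i ∈ Finset.range 3, (-u) ^ (i + 1) / (i + 1)) := by ring
    have h2 : |Real.log (1 + u) - (u - u ^ 2 / 2 + u ^ 3 / 3)| ≤ |u| ^ 4 / (1 - |u|) := by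
      have hs : (∑ i ∈ Finset.range 3, (-u) ^ (i + 1) / (i + 1)) + Real.log (1 - -u)
          = Real.log (1 + u) - (u - u ^ 2 / 2 + u ^ 3 / 3) := by
        rw [show (1 : ℝ) - -u = 1 + u by ring]
        simp [Finset.sum_range_succ]
        try ring
      rw [hs] at h3
      rw [abs_neg] at h3
      convert h3 using 2
    have hu3 : (0:ℝ) < |u| ^ 3 := by positivity
    have hden : (0:ℝ) < 1 - |u| := by linarith [abs_nonneg u]
    rw [Real.norm_eq_abs, rr, abs_div, abs_pow]
    calc |Real.log (1 + u) - (u - u ^ 2 / 2 + u ^ 3 / 3)| / |u| ^ 3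
        ≤ (|u| ^ 4 / (1 - |u|)) / |u| ^ 3 := by gcongr
      _ = |u| / (1 - |u|) := by
          field_simp

/-- The explicit function whose value at `1/n` equals `n^2 (z n - z (n+1))`. -/
noncomputable def Phi (a x : ℝ) : ℝ :=
  (-(2*a+2) - 4*a*x) / (2*(2+2*x)*(1+a*x))
  + (2+x) / (2*(2+2*x)^2) - 1/(4*(1+a*x)^2) + 1/2
  + (1/3) * (1/8 - 1/(2+2*x)^3) + x/(6*(1+a*x)^3) - x/3
  - (1/(2+2*x)^3) * rr (-x/(2+2*x))
  + (1/8) * rr (-x/2)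
  + (x/(2*(1+a*x)^3)) * rr (x/(1+a*x))
  - x * rr x

set_option maxHeartbeats 1000000 in
lemma Phi_tendsto (a : ℝ) : Tendsto (fun x => Phi a x) (𝓝 0) (𝓝 (-a/2)) := by
  have hrc : ContinuousAt rr 0 := by
    rw [ContinuousAt, rr_zero]; exact rr_tendsto
  have hg1 : ContinuousAt (fun x : ℝ => -x/(2+2*x)) 0 := by
    apply ContinuousAt.div (by fun_prop) (by fun_prop); norm_num
  have hg2 : ContinuousAt (fun x : ℝ => -x/2) 0 := by fun_prop
  have hg3 : ContinuousAt (fun x : ℝ => x/(1+a*x)) 0 := by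
    apply ContinuousAt.div (by fun_prop) (by fun_prop); norm_num
  have hc1 : ContinuousAt (fun x : ℝ => rr (-x/(2+2*x))) 0 := by
    have h := ContinuousAt.comp (g := rr) (by simpa using hrc) hg1
    exact h
  have hc2 : ContinuousAt (fun x : ℝ => rr (-x/2)) 0 := by
    have h := ContinuousAt.comp (g := rr) (by simpa using hrc) hg2
    exact h
  have hc3 : ContinuousAt (fun x : ℝ => rr (x/(1+a*x))) 0 := by
    have h := ContinuousAt.comp (g := rr) (by simpa using hrc) hg3
    exact h
  have hc4 : ContinuousAt (fun x : ℝ => rr x) 0 := hrc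
  have hc : ContinuousAt (fun x => Phi a x) 0 := by
    unfold Phi
    refine ((((((((((ContinuousAt.add ?_ ?_).sub ?_).add ?_).add ?_).add ?_).sub ?_).sub
      ?_).add ?_).add ?_).sub ?_)
    · exact ContinuousAt.div (by fun_prop) (by fun_prop) (by norm_num)
    · exact ContinuousAt.div (by fun_prop) (by fun_prop) (by norm_num)
    · exact ContinuousAt.div (by fun_prop) (by fun_prop) (by norm_num)
    · fun_prop
    · apply ContinuousAt.mul (by fun_prop)
      apply ContinuousAt.sub (by fun_prop)
      exact ContinuousAt.div (by fun_prop) (by fun_prop) (by norm_num)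
    · exact ContinuousAt.div (by fun_prop) (by fun_prop) (by norm_num)
    · fun_prop
    · exact ContinuousAt.mul (ContinuousAt.div (by fun_prop) (by fun_prop) (by norm_num)) hc1
    · exact ContinuousAt.mul (by fun_prop) hc2
    · exact ContinuousAt.mul (ContinuousAt.div (by fun_prop) (by fun_prop) (by norm_num)) hc3
    · exact ContinuousAt.mul (by fun_prop) hc4
  have hval : Phi a 0 = -a/2 := by
    norm_num [Phi, rr_zero]
    ring
  have := hc.tendsto
  rwa [hval] at this

set_option maxHeartbeats 1000000 in
lemma key_s3 (a x y : ℝ) (hx : 0 < x) (hx2 : x < 1) (hax : 0 < 1 + a*x)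
    (hy : y = 1/x) :
    y^2 * (y * (Real.log (1 - 1/(2*y+2)) - Real.log (1 - 1/(2*y)))
      + (1/2) * Real.log (1 + 1/(y+a)) - Real.log (1 + 1/y))
      = Phi a x := by
  subst hy
  have h22 : (0:ℝ) < 2+2*x := by linarith
  have r1 : (1:ℝ) - 1/(2*(1/x)+2) = 1 + -x/(2+2*x) := by
    field_simp
    try ring
  have r2 : (1:ℝ) - 1/(2*(1/x)) = 1 + -x/2 := by
    field_simp
    try ring
  have r3 : (1:ℝ) + 1/((1/x)+a) = 1 + x/(1+a*x) := by
    field_simp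
    try ring
  have r4 : (1:ℝ) + 1/(1/x) = 1 + x := by
    rw [one_div_one_div]
  rw [r1, r2, r3, r4, log_eq_rr (-x/(2+2*x)), log_eq_rr (-x/2),
    log_eq_rr (x/(1+a*x)), log_eq_rr x, Phi]
  generalize rr (-x/(2+2*x)) = q1
  generalize rr (-x/2) = q2
  generalize rr (x/(1+a*x)) = q3
  generalize rr x = q4
  have g1 : (1/x)^3 * (-x/(2+2*x) - -x/2) + (1/(2*x^2)) * (x/(1+a*x)) - (1/x^2) * x
      = (-(2*a+2) - 4*a*x) / (2*(2+2*x)*(1+a*x)) := by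
    have hax0 : (1:ℝ) + a*x ≠ 0 := ne_of_gt hax
    have hx0 : x ≠ 0 := ne_of_gt hx
    have hax1 : (1:ℝ) + x*a ≠ 0 := by rw [mul_comm]; exact ne_of_gt hax
    field_simp
    ring
  have g2 : (1/x)^3 * (-(-x/(2+2*x))^2/2 + (-x/2)^2/2)
        + (1/(2*x^2)) * (-(x/(1+a*x))^2/2) - (1/x^2) * (-x^2/2)
      = (2+x)/(2*(2+2*x)^2) - 1/(4*(1+a*x)^2) + 1/2 := by
    field_simp
    ring
  have g3 : (1/x)^3 * ((-x/(2+2*x))^3/3 - (-x/2)^3/3)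
        + (1/(2*x^2)) * ((x/(1+a*x))^3/3) - (1/x^2) * (x^3/3)
      = (1/3)*(1/8 - 1/(2+2*x)^3) + x/(6*(1+a*x)^3) - x/3 := by
    field_simp
    ring
  have k1 : (1/x)^3 * (-x/(2+2*x))^3 = -(1/(2+2*x)^3) := by
    field_simp
  have k2 : (1/x)^3 * (-x/2)^3 = -(1/8) := by
    field_simp
    ring
  have k3 : (1/(2*x^2)) * (x/(1+a*x))^3 = x/(2*(1+a*x)^3) := by
    field_simp
  have k4 : (1/x^2) * x^3 = x := by
    field_simp
  linear_combination g1 + g2 + g3 + q1*k1 - q2*k2 + q3*k3 - q4*k4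

theorem z_difference_limit (a : ℝ) (ha : -1 < a) (z : ℕ → ℝ)
    (hz : ∀ n : ℕ, 1 ≤ n →
      W n = Real.sqrt (Real.exp 1 / π) * (1 - 1 / (2 * (n : ℝ))) ^ n *
        (Real.sqrt ((n : ℝ) + a) / n) * Real.exp (z n)) :
    Tendsto (fun n : ℕ => (n : ℝ) ^ 2 * (z n - z (n + 1))) atTop (𝓝 (-a / 2)) := by
  have hWpos : ∀ m : ℕ, 0 < W m := by
    intro m
    unfold W
    exact div_pos (Finset.prod_pos fun k _ => by positivity)
      (Finset.prod_pos fun k _ => by positivity)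
  have hCpos : 0 < Real.sqrt (Real.exp 1 / π) :=
    Real.sqrt_pos.mpr (div_pos (Real.exp_pos 1) Real.pi_pos)
  have hB : ∀ m : ℕ, 1 ≤ m → (0:ℝ) < 1 - 1/(2*(m:ℝ)) := by
    intro m hm
    have hm1 : (1:ℝ) ≤ (m:ℝ) := by exact_mod_cast hm
    rw [sub_pos, div_lt_one (by linarith)]
    linarith
  have hlog : ∀ m : ℕ, 1 ≤ m → (0:ℝ) < (m:ℝ) + a →
      Real.log (W m) = Real.log (Real.sqrt (Real.exp 1 / π))
        + m * Real.log (1 - 1/(2*(m:ℝ)))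
        + (Real.log ((m:ℝ)+a) / 2 - Real.log (m:ℝ)) + z m := by
    intro m hm hma
    have hm1 : (1:ℝ) ≤ (m:ℝ) := by exact_mod_cast hm
    have hm0 : (0:ℝ) < m := by linarith
    have hBm := hB m hm
    have hsq : Real.sqrt ((m:ℝ)+a) ≠ 0 := by positivity
    rw [hz m hm,
      Real.log_mul (by positivity) (Real.exp_ne_zero _),
      Real.log_mul (mul_ne_zero (ne_of_gt hCpos) (pow_ne_zero _ (ne_of_gt hBm)))
        (by positivity),
      Real.log_mul (ne_of_gt hCpos) (pow_ne_zero _ (ne_of_gt hBm)),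
      Real.log_exp, Real.log_pow,
      Real.log_div hsq (ne_of_gt hm0), Real.log_sqrt hma.le]
  have hzd : ∀ n : ℕ, 1 ≤ n → z n - z (n+1)
      = (n:ℝ) * (Real.log (1 - 1/(2*(n:ℝ)+2)) - Real.log (1 - 1/(2*(n:ℝ))))
        + (1/2) * Real.log (1 + 1/((n:ℝ)+a)) - Real.log (1 + 1/(n:ℝ)) := by
    intro n hn
    have hn1 : (1:ℝ) ≤ (n:ℝ) := by exact_mod_cast hn
    have hn0 : (0:ℝ) < n := by linarith
    have hna : (0:ℝ) < (n:ℝ) + a := by linarith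
    have hna1 : (0:ℝ) < (n:ℝ) + 1 + a := by linarith
    have h22 : (0:ℝ) < 2*(n:ℝ)+2 := by linarith
    have E1 := hlog n hn hna
    have E2 := hlog (n+1) (by omega) (by push_cast; linarith)
    push_cast at E2
    rw [show (2:ℝ)*((n:ℝ)+1) = 2*(n:ℝ)+2 by ring] at E2
    have hWrec : W (n+1) = W n * ((2*(n:ℝ)+1)/(2*(n:ℝ)+2)) := by
      unfold W
      rw [Finset.prod_range_succ, Finset.prod_range_succ]
      have hp1 : (∏ k ∈ Finset.range n, (2*(k:ℝ)+2)) ≠ 0 :=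
        ne_of_gt (Finset.prod_pos fun k _ => by positivity)
      field_simp
      try ring
    have hlogWrec : Real.log (W (n+1))
        = Real.log (W n) + Real.log (1 - 1/(2*(n:ℝ)+2)) := by
      rw [hWrec, Real.log_mul (ne_of_gt (hWpos n)) (by positivity)]
      congr 1
      rw [show (1:ℝ) - 1/(2*(n:ℝ)+2) = (2*(n:ℝ)+1)/(2*(n:ℝ)+2) by field_simp; try ring]
    rw [hlogWrec] at E2
    have hl3 : Real.log ((n:ℝ)+1+a) - Real.log ((n:ℝ)+a)
        = Real.log (1 + 1/((n:ℝ)+a)) := by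
      rw [← Real.log_div (by positivity) (ne_of_gt hna)]
      congr 1
      field_simp
      try ring
    have hl4 : Real.log ((n:ℝ)+1) - Real.log (n:ℝ)
        = Real.log (1 + 1/(n:ℝ)) := by
      rw [← Real.log_div (by positivity) (ne_of_gt hn0)]
      congr 1
      field_simp
      try ring
    have : z n - z (n+1)
        = ((n:ℝ)+1) * Real.log (1 - 1/(2*(n:ℝ)+2))
          - Real.log (1 - 1/(2*(n:ℝ)+2))
          - (n:ℝ) * Real.log (1 - 1/(2*(n:ℝ)))
          + (Real.log ((n:ℝ)+1+a) - Real.log ((n:ℝ)+a)) / 2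
          - (Real.log ((n:ℝ)+1) - Real.log (n:ℝ)) := by
      linarith [E1, E2]
    rw [hl3, hl4] at this
    rw [this]
    ring
  have hx : Tendsto (fun n : ℕ => 1/(n:ℝ)) atTop (𝓝 0) :=
    tendsto_one_div_atTop_nhds_zero_nat
  have hPhi := (Phi_tendsto a).comp hx
  apply hPhi.congr'
  filter_upwards [eventually_ge_atTop 2] with n hn
  simp only [Function.comp]
  have hn1 : (1:ℝ) ≤ (n:ℝ) := by exact_mod_cast Nat.one_le_of_lt hn
  have hn2 : (2:ℝ) ≤ (n:ℝ) := by exact_mod_cast hn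
  have hn0 : (0:ℝ) < n := by linarith
  have hxpos : (0:ℝ) < 1/(n:ℝ) := by positivity
  have hxlt : 1/(n:ℝ) < 1 := by rw [div_lt_one hn0]; linarith
  have hax : (0:ℝ) < 1 + a*(1/(n:ℝ)) := by
    rw [show (1:ℝ) + a*(1/(n:ℝ)) = ((n:ℝ)+a)/n by field_simp; try ring]
    apply div_pos (by linarith) hn0
  rw [hzd n (by omega)]
  exact (key_s3 a (1/(n:ℝ)) (n:ℝ) hxpos hxlt hax (one_div_one_div (n:ℝ)).symm).symm
end
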